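/- Let μ, ν ∈ ℝ^d with μ ≠ ν, R > 0, w* = R·(ν - μ)/‖ν - μ‖, b* = -(1/2)·⟨ν + μ, w*⟩, and 0 < p₁ < q₁. If a class-0 heterophilic node has filtered feature exactly equal to its mean (p₁μ + q₁ν)/(p₁+q₁), and y = 0, then the binary cross-entropy loss log(1 + exp(⟨x̃, w*⟩ + b*)) is at least (R(q₁ - p₁)/(2(q₁+p₁)))·‖μ - ν‖. -/

import Mathlib

/-!
The logit is in fact equal to the bound: the mean filtered feature minus the midpoint
`(μ + ν) / 2` is `(q₁ - p₁) / (2 (q₁ + p₁)) • (ν - μ)`, and `w*` pairs with `ν - μ` to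
`R ‖ν - μ‖`. The softplus `log (1 + exp t)` dominates its argument.
-/

open RealInnerProductSpace

theorem le_log_one_add_exp (t : ℝ) : t ≤ Real.log (1 + Real.exp t) := by
  calc t = Real.log (Real.exp t) := (Real.log_exp t).symm
    _ ≤ Real.log (1 + Real.exp t) := Real.log_le_log (Real.exp_pos t) (by linarith)

theorem smul_mixture_sub_midpoint {E : Type*} [AddCommGroup E] [Module ℝ E]
    {p q : ℝ} (hpq : p + q ≠ 0) (μ ν : E) :
    (1 / (p + q)) • (p • μ + q • ν) - (1 / 2 : ℝ) • (ν + μ)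
      = ((q - p) / (2 * (q + p))) • (ν - μ) := by
  have hqp : q + p ≠ 0 := by rwa [add_comm]
  match_scalars <;> field_simp <;> ring

theorem real_inner_smul_div_norm_self {E : Type*} [NormedAddCommGroup E] [InnerProductSpace ℝ E]
    (v : E) (R : ℝ) : ⟪v, (R / ‖v‖) • v⟫ = R * ‖v‖ := by
  rcases eq_or_ne v 0 with rfl | hv
  · simp
  · rw [real_inner_smul_right, real_inner_self_eq_norm_sq]
    field_simp [norm_ne_zero_iff.mpr hv]

theorem heterophilic_loss_lower_bound_general {d : ℕ}
    (μ ν : EuclideanSpace ℝ (Fin d))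
    (R : ℝ)
    (w : EuclideanSpace ℝ (Fin d)) (hw : w = (R / ‖ν - μ‖) • (ν - μ))
    (b : ℝ) (hb : b = -(1 / 2) * ⟪ν + μ, w⟫)
    (p₁ q₁ : ℝ) (hp : 0 < p₁) (hpq : p₁ < q₁)
    (x : EuclideanSpace ℝ (Fin d)) (hx : x = (1 / (p₁ + q₁)) • (p₁ • μ + q₁ • ν)) :
    Real.log (1 + Real.exp (⟪x, w⟫ + b))
      ≥ (R * (q₁ - p₁) / (2 * (q₁ + p₁))) * ‖μ - ν‖ := by
  have hsum : p₁ + q₁ ≠ 0 := by linarith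
  have hlogit : ⟪x, w⟫ + b = (R * (q₁ - p₁) / (2 * (q₁ + p₁))) * ‖μ - ν‖ :=
    calc ⟪x, w⟫ + b = ⟪x - (1 / 2 : ℝ) • (ν + μ), w⟫ := by
          rw [hb, inner_sub_left, real_inner_smul_left]; ring
      _ = (q₁ - p₁) / (2 * (q₁ + p₁)) * ⟪ν - μ, w⟫ := by
          rw [hx, smul_mixture_sub_midpoint hsum, real_inner_smul_left]
      _ = (R * (q₁ - p₁) / (2 * (q₁ + p₁))) * ‖μ - ν‖ := by
          rw [hw, real_inner_smul_div_norm_self, norm_sub_rev]; ring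
  exact hlogit ▸ le_log_one_add_exp _

theorem heterophilic_loss_lower_bound {d : ℕ}
    (μ ν : EuclideanSpace ℝ (Fin d)) (hμν : μ ≠ ν)
    (R : ℝ) (hR : 0 < R)
    (w : EuclideanSpace ℝ (Fin d)) (hw : w = (R / ‖ν - μ‖) • (ν - μ))
    (b : ℝ) (hb : b = -(1 / 2) * ⟪ν + μ, w⟫)
    (p₁ q₁ : ℝ) (hp : 0 < p₁) (hpq : p₁ < q₁)
    (x : EuclideanSpace ℝ (Fin d)) (hx : x = (1 / (p₁ + q₁)) • (p₁ • μ + q₁ • ν)) :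
    Real.log (1 + Real.exp (⟪x, w⟫ + b))
      ≥ (R * (q₁ - p₁) / (2 * (q₁ + p₁))) * ‖μ - ν‖ :=
  heterophilic_loss_lower_bound_general μ ν R w hw b hb p₁ q₁ hp hpq x hx
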